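/- For every q ∈ (0,8), the open square D = {z ∈ ℂ : 0 < Re z < 1 and |Im z| < min(Re z, 1 − Re z)} is covered by Ω_q ∪ Ω_q', where Ω_q' = {1/2 + i(z − 1/2) : z ∈ Ω_q} is the image of Ω_q under the rotation of center 1/2 and angle π/2. -/

import Mathlib

open Set Metric

/-- The domain `Ω = ⋃_{0<x≤1/2} B(x, x/√2) ∪ ⋃_{1/2<x<1} B(x, (1-x)/√2)`. -/
def Omega : Set ℂ :=
  (⋃ x ∈ Ioc (0 : ℝ) (1 / 2), ball (x : ℂ) (x / Real.sqrt 2)) ∪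
    ⋃ x ∈ Ioo (1 / 2 : ℝ) 1, ball (x : ℂ) ((1 - x) / Real.sqrt 2)

/-- The open ellipse `Ell_q = {z : q(Re z - 1/2)² + (16-q)(Im z)² < 1}`. -/
def EllQ (q : ℝ) : Set ℂ :=
  {z : ℂ | q * (z.re - 1 / 2) ^ 2 + (16 - q) * z.im ^ 2 < 1}

/-- The domain `Ω_q = (Ω ∩ {Re z < 1/4 ∨ Re z > 3/4}) ∪ (Ω ∩ Ell_q)`. -/
def OmegaQ (q : ℝ) : Set ℂ :=
  (Omega ∩ {z : ℂ | z.re < 1 / 4 ∨ 3 / 4 < z.re}) ∪ (Omega ∩ EllQ q)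

/-- The open square `D` with vertices `0`, `1/2 + i/2`, `1`, `1/2 - i/2`. -/
def SquareD : Set ℂ := {z : ℂ | 0 < z.re ∧ z.re < 1 ∧ |z.im| < min z.re (1 - z.re)}

/-!
The square `D` is the region `|Re z - 1/2| + |Im z| < 1/2`. Its two caps `|Re z - 1/2| > 1/4`
lie in the part of `Ω_q` cut off by `Re z < 1/4 ∨ Re z > 3/4`: a point `z` of the left cap lies
in the ball `B(2 Re z, √2 Re z)` since `|Im z| < Re z`, and symmetrically on the right. The
rotation by `π/2` around `1/2` preserves `D` and exchanges these caps with the caps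
`|Im z| > 1/4`. What remains is the square `|Re z - 1/2|, |Im z| ≤ 1/4` with its corners
removed, which lies in the ball `B(1/2, 1/(2√2))` and, for `0 < q ≤ 8`, in `Ell_q`.
-/

lemma mem_ball_div_sqrt_two_iff {z : ℂ} {x r : ℝ} (hr : 0 ≤ r) :
    z ∈ ball (x : ℂ) (r / √2) ↔ 2 * ((z.re - x) ^ 2 + z.im ^ 2) < r ^ 2 := by
  have hr' : r / √2 = √(r ^ 2 / 2) := by rw [Real.sqrt_div' _ zero_le_two, Real.sqrt_sq hr]
  rw [mem_ball, Complex.dist_eq_re_im, Complex.ofReal_re, Complex.ofReal_im, sub_zero, hr',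
    Real.sqrt_lt_sqrt_iff (by positivity)]
  constructor <;> intro h <;> linarith

lemma mem_Omega_of_re_le_quarter {z : ℂ} (him : |z.im| < z.re) (hre : z.re ≤ 1 / 4) :
    z ∈ Omega := by
  have hre0 : 0 < z.re := (abs_nonneg _).trans_lt him
  refine Or.inl (mem_iUnion₂.mpr ⟨2 * z.re, ⟨by linarith, by linarith⟩, ?_⟩)
  rw [mem_ball_div_sqrt_two_iff (by linarith)]
  nlinarith [sq_lt_sq' (neg_lt_of_abs_lt him) (lt_of_abs_lt him)]

lemma mem_Omega_of_three_quarters_lt_re {z : ℂ} (him : |z.im| < 1 - z.re) (hre : 3 / 4 < z.re) :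
    z ∈ Omega := by
  have hre1 : z.re < 1 := by linarith [abs_nonneg z.im]
  refine Or.inr (mem_iUnion₂.mpr ⟨2 * z.re - 1, ⟨by linarith, by linarith⟩, ?_⟩)
  rw [mem_ball_div_sqrt_two_iff (by linarith)]
  nlinarith [sq_lt_sq' (neg_lt_of_abs_lt him) (lt_of_abs_lt him)]

lemma mem_Omega_of_sq_add_sq_lt {z : ℂ} (h : (z.re - 1 / 2) ^ 2 + z.im ^ 2 < 1 / 8) :
    z ∈ Omega := by
  refine Or.inl (mem_iUnion₂.mpr ⟨1 / 2, ⟨by norm_num, le_rfl⟩, ?_⟩)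
  rw [mem_ball_div_sqrt_two_iff (by norm_num)]
  linarith

lemma mem_EllQ_of_sq_add_sq_lt {q : ℝ} (hq0 : 0 < q) (hq8 : q ≤ 8) {z : ℂ}
    (h : (z.re - 1 / 2) ^ 2 + z.im ^ 2 < 1 / 8) (him : |z.im| ≤ 1 / 4) : z ∈ EllQ q := by
  have him2 : z.im ^ 2 ≤ 1 / 16 := by nlinarith [sq_abs z.im, abs_nonneg z.im]
  show q * (z.re - 1 / 2) ^ 2 + (16 - q) * z.im ^ 2 < 1
  rcases lt_or_ge ((z.re - 1 / 2) ^ 2) (z.im ^ 2) with hlt | hge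
  · -- the left side is `16 (Im z)² - q ((Im z)² - (Re z - 1/2)²) < 16 (Im z)² ≤ 1`
    nlinarith [mul_pos hq0 (sub_pos.mpr hlt)]
  · -- the left side is `8 |z - 1/2|² - (8 - q) ((Re z - 1/2)² - (Im z)²) ≤ 8 |z - 1/2|² < 1`
    nlinarith [mul_le_mul_of_nonneg_right hq8 (sub_nonneg.mpr hge)]

lemma abs_re_sub_half_add_abs_im_lt {z : ℂ} (hz : z ∈ SquareD) :
    |z.re - 1 / 2| + |z.im| < 1 / 2 := by
  obtain ⟨-, -, him⟩ := hz
  rw [lt_min_iff] at him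
  cases abs_cases (z.re - 1 / 2) <;> linarith [him.1, him.2]

lemma sq_add_sq_lt_of_abs_le_quarter {u v : ℝ} (hu : |u| ≤ 1 / 4) (hv : |v| ≤ 1 / 4)
    (h : |u| + |v| < 1 / 2) : u ^ 2 + v ^ 2 < 1 / 8 := by
  rw [← sq_abs u, ← sq_abs v]
  nlinarith [abs_nonneg u, abs_nonneg v]

lemma rotate_mem_SquareD {z : ℂ} (hz : z ∈ SquareD) :
    1 / 2 - Complex.I * (z - 1 / 2) ∈ SquareD := by
  obtain ⟨-, -, him⟩ := hz
  have hre' : (1 / 2 - Complex.I * (z - 1 / 2)).re = 1 / 2 + z.im := by simp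
  have him' : (1 / 2 - Complex.I * (z - 1 / 2)).im = 1 / 2 - z.re := by simp
  simp only [SquareD, Set.mem_ofPred_eq, hre', him', lt_min_iff, abs_lt] at him ⊢
  refine ⟨by linarith, by linarith, ⟨?_, ?_⟩, ?_, ?_⟩ <;> linarith

lemma mem_OmegaQ_of_quarter_lt_abs (q : ℝ) {z : ℂ} (hz : z ∈ SquareD)
    (hre : 1 / 4 < |z.re - 1 / 2|) : z ∈ OmegaQ q := by
  obtain ⟨-, -, him⟩ := hz
  rw [lt_min_iff] at him
  rcases lt_abs.mp hre with hright | hleft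
  · exact Or.inl ⟨mem_Omega_of_three_quarters_lt_re him.2 (by linarith), Or.inr (by linarith)⟩
  · exact Or.inl ⟨mem_Omega_of_re_le_quarter him.1 (by linarith), Or.inl (by linarith)⟩

/-- For `q ∈ (0,8)`, the square `D` is covered by `Ω_q` together with its rotation by `π/2`
around the center `1/2`. -/
theorem squareD_subset_union (q : ℝ) (hq : q ∈ Ioo (0 : ℝ) 8) :
    SquareD ⊆ OmegaQ q ∪ ((fun z : ℂ => 1 / 2 + Complex.I * (z - 1 / 2)) '' OmegaQ q) := by
  intro z hz
  by_cases hre : 1 / 4 < |z.re - 1 / 2|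
  · exact Or.inl (mem_OmegaQ_of_quarter_lt_abs q hz hre)
  by_cases him : 1 / 4 < |z.im|
  · refine Or.inr ⟨1 / 2 - Complex.I * (z - 1 / 2), mem_OmegaQ_of_quarter_lt_abs q
      (rotate_mem_SquareD hz) ?_, ?_⟩
    · simpa using him
    · linear_combination (-(z - 1 / 2)) * Complex.I_mul_I
  have hsq := sq_add_sq_lt_of_abs_le_quarter (not_lt.mp hre) (not_lt.mp him)
    (abs_re_sub_half_add_abs_im_lt hz)
  exact Or.inl (Or.inr ⟨mem_Omega_of_sq_add_sq_lt hsq,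
    mem_EllQ_of_sq_add_sq_lt hq.1 hq.2.le hsq (not_lt.mp him)⟩)
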